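/- Soundness of sub-invariants for lower bounds: suppose ∑' τ, W σ τ = 1 for every σ (the loop is AST) and the post-expectation E : Σ → ℝ≥0∞ satisfies E ≤ 1 pointwise. If I : Σ → ℝ≥0∞ is a sub-invariant bounded by one, i.e., I ≤ 1 pointwise and I ≤ Φ_E I pointwise, and if a pre-expectation preE : Σ → ℝ≥0∞ satisfies preE ≤ I pointwise, then preE ≤ lfp Φ_E pointwise; that is, preE lower-bounds the weakest pre-expectation of the loop with respect to E. -/

import Mathlib

open ENNReal

/-- The characteristic function of the loop `while G do body` with respect to
post-expectation `E`. -/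
noncomputable def Phi {S : Type*} (G : S → Prop) [DecidablePred G] (body : S → PMF S)
    (E : S → ℝ≥0∞) (X : S → ℝ≥0∞) : S → ℝ≥0∞ :=
  fun σ => if G σ then ∑' τ, body σ τ * X τ else E σ

theorem Phi_monotone {S : Type*} (G : S → Prop) [DecidablePred G] (body : S → PMF S)
    (E : S → ℝ≥0∞) : Monotone (Phi G body E) := by
  intro X Y hXY σ
  simp only [Phi]
  split
  · exact ENNReal.tsum_le_tsum fun τ => mul_le_mul_of_nonneg_left (hXY τ) zero_le
  · exact le_rfl

/-- The characteristic function, bundled as a monotone map on the complete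
lattice of expectations. -/
noncomputable def PhiHom {S : Type*} (G : S → Prop) [DecidablePred G] (body : S → PMF S)
    (E : S → ℝ≥0∞) : (S → ℝ≥0∞) →o (S → ℝ≥0∞) :=
  ⟨Phi G body E, Phi_monotone G body E⟩

/-- The stopped `n`-step kernels of the loop `while G do body`. -/
noncomputable def mu {S : Type*} (G : S → Prop) [DecidablePred G] [DecidableEq S]
    (body : S → PMF S) : ℕ → S → S → ℝ≥0∞
  | 0 => fun σ τ => if ¬ G σ ∧ τ = σ then 1 else 0
  | n + 1 => fun σ =>
      if G σ then (fun τ => ∑' σ', body σ σ' * mu G body n σ' τ) else mu G body 0 σ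

/-- The loop's output sub-distribution. -/
noncomputable def W {S : Type*} (G : S → Prop) [DecidablePred G] [DecidableEq S]
    (body : S → PMF S) (σ τ : S) : ℝ≥0∞ :=
  ⨆ n, mu G body n σ τ

/-!
The characteristic function splits as `Φ_E (X + Y) = Φ_E X + Φ_0 Y`. As `lfp Φ_E` is a fixed
point, monotonicity turns `I ≤ 1` and `I ≤ Φ_E I` into `I ≤ lfp Φ_E + Φ_0ⁿ 1` for every `n`.
Here `Φ_0ⁿ 1` is the probability that the loop is still running after `n` iterations; it equals
`1 - ∑' τ, μ_{n-1} σ τ`, which tends to `0` when the loop terminates almost surely.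
-/

theorem ENNReal.tsum_iSup_of_monotone {α : Type*} {f : ℕ → α → ℝ≥0∞}
    (hf : ∀ a, Monotone fun n => f n a) :
    ∑' a, ⨆ n, f n a = ⨆ n, ∑' a, f n a := by
  refine le_antisymm ?_ (iSup_le fun n => ENNReal.tsum_le_tsum fun a => le_iSup (f · a) n)
  rw [ENNReal.tsum_eq_iSup_sum]
  refine iSup_le fun s => ?_
  rw [ENNReal.finsetSum_iSup_of_monotone (f := fun a n => f n a) hf]
  exact iSup_mono fun n => ENNReal.sum_le_tsum s

section Loop

variable {S : Type*} (G : S → Prop) [DecidablePred G] (body : S → PMF S)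

theorem Phi_add (E X Y : S → ℝ≥0∞) :
    Phi G body E (X + Y) = Phi G body E X + Phi G body 0 Y := by
  funext σ
  by_cases hG : G σ
  · simp only [Phi, hG, if_true, Pi.add_apply, mul_add]
    exact ENNReal.tsum_add
  · simp [Phi, hG]

noncomputable def runMass (n : ℕ) : S → ℝ≥0∞ :=
  (Phi G body 0)^[n] 1

theorem runMass_succ (n : ℕ) : runMass G body (n + 1) = Phi G body 0 (runMass G body n) :=
  Function.iterate_succ_apply' _ _ _

theorem le_lfp_add_runMass (E I : S → ℝ≥0∞) (hI : I ≤ 1) (hsub : I ≤ Phi G body E I) (n : ℕ) :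
    I ≤ OrderHom.lfp (PhiHom G body E) + runMass G body n := by
  set L := OrderHom.lfp (PhiHom G body E)
  induction n with
  | zero => exact hI.trans le_add_self
  | succ n ih =>
    calc I ≤ Phi G body E I := hsub
      _ ≤ Phi G body E (L + runMass G body n) := Phi_monotone G body E ih
      _ = L + runMass G body (n + 1) := by
        rw [Phi_add, runMass_succ]
        exact congrArg (· + _) (OrderHom.map_lfp (PhiHom G body E))

variable [DecidableEq S]

theorem mu_succ_of_guard (n : ℕ) {σ : S} (hG : G σ) (τ : S) :
    mu G body (n + 1) σ τ = ∑' σ', body σ σ' * mu G body n σ' τ := by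
  simp only [mu, hG, if_true]

theorem mu_succ_of_not_guard (n : ℕ) {σ : S} (hG : ¬ G σ) :
    mu G body (n + 1) σ = mu G body 0 σ := by
  simp only [mu, hG, if_false]

theorem mu_le_mu_succ (n : ℕ) (σ τ : S) : mu G body n σ τ ≤ mu G body (n + 1) σ τ := by
  induction n generalizing σ with
  | zero => by_cases hG : G σ <;> simp [mu, hG]
  | succ n ih =>
    by_cases hG : G σ
    · rw [mu_succ_of_guard G body n hG, mu_succ_of_guard G body (n + 1) hG]
      exact ENNReal.tsum_le_tsum fun σ' => mul_le_mul_right (ih σ') _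
    · rw [mu_succ_of_not_guard G body n hG, mu_succ_of_not_guard G body (n + 1) hG]

theorem tsum_mu_of_not_guard (n : ℕ) {σ : S} (hG : ¬ G σ) : ∑' τ, mu G body n σ τ = 1 := by
  have h0 : ∑' τ, mu G body 0 σ τ = 1 := by
    simp only [mu, hG, not_false_iff, true_and]
    exact tsum_ite_eq σ 1
  cases n with
  | zero => exact h0
  | succ n => rw [mu_succ_of_not_guard G body n hG, h0]

/-- Conservation of mass: after `n + 1` iterations a run has either terminated, with output
distribution `μ_n σ`, or is still running. -/
theorem tsum_mu_add_runMass (n : ℕ) (σ : S) :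
    ∑' τ, mu G body n σ τ + runMass G body (n + 1) σ = 1 := by
  by_cases hG : G σ
  swap
  · simp [tsum_mu_of_not_guard G body n hG, runMass_succ, Phi, hG]
  induction n generalizing σ with
  | zero => simp [mu, hG, runMass, Phi, (body σ).tsum_coe]
  | succ n ih =>
    have hsum : ∑' τ, mu G body (n + 1) σ τ = ∑' σ', body σ σ' * ∑' τ, mu G body n σ' τ := by
      simp_rw [mu_succ_of_guard G body n hG]
      rw [ENNReal.tsum_comm]
      exact tsum_congr fun σ' => ENNReal.tsum_mul_left
    have hrun : ∀ σ', ∑' τ, mu G body n σ' τ + runMass G body (n + 1) σ' = 1 := fun σ' => by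
      by_cases hG' : G σ'
      · exact ih σ' hG'
      · simp [tsum_mu_of_not_guard G body n hG', runMass_succ, Phi, hG']
    rw [hsum, runMass_succ G body (n + 1)]
    simp only [Phi, hG, if_true, ← ENNReal.tsum_add, ← mul_add, hrun, mul_one]
    exact (body σ).tsum_coe

theorem iInf_runMass_eq_zero (hAST : ∀ σ, ∑' τ, W G body σ τ = 1) (σ : S) :
    ⨅ n, runMass G body (n + 1) σ = 0 := by
  have hsup : ⨆ n, ∑' τ, mu G body n σ τ = 1 := by
    rw [← ENNReal.tsum_iSup_of_monotone fun τ =>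
      monotone_nat_of_le_succ fun n => mu_le_mu_succ G body n σ τ]
    exact hAST σ
  have hrun : ∀ n, runMass G body (n + 1) σ = 1 - ∑' τ, mu G body n σ τ := fun n => by
    have hmass := tsum_mu_add_runMass G body n σ
    rw [add_comm] at hmass
    exact ENNReal.eq_sub_of_add_eq (ne_top_of_le_ne_top one_ne_top (le_add_self.trans_eq hmass))
      hmass
  simp only [hrun, ← ENNReal.sub_iSup one_ne_top, hsup, tsub_self]

end Loop

theorem subinvariant_lower_bound_general {S : Type*} [DecidableEq S]
    (G : S → Prop) [DecidablePred G] (body : S → PMF S)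
    (hAST : ∀ σ : S, ∑' τ, W G body σ τ = 1)
    (E : S → ℝ≥0∞)
    (I : S → ℝ≥0∞) (hI : ∀ σ, I σ ≤ 1)
    (hsub : ∀ σ, I σ ≤ Phi G body E I σ)
    (preE : S → ℝ≥0∞) (hpre : ∀ σ, preE σ ≤ I σ) :
    ∀ σ, preE σ ≤ OrderHom.lfp (PhiHom G body E) σ := by
  intro σ
  calc preE σ ≤ I σ := hpre σ
    _ ≤ ⨅ n, OrderHom.lfp (PhiHom G body E) σ + runMass G body (n + 1) σ :=
      le_iInf fun n => le_lfp_add_runMass G body E I hI hsub (n + 1) σ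
    _ = OrderHom.lfp (PhiHom G body E) σ := by
      rw [← ENNReal.add_iInf, iInf_runMass_eq_zero G body hAST σ, add_zero]

/-- soundness of sub-invariants for lower bounds on the weakest
pre-expectation, for almost surely terminating loops and post-expectations
bounded by one. -/
theorem subinvariant_lower_bound {S : Type*} [Countable S] [DecidableEq S]
    (G : S → Prop) [DecidablePred G] (body : S → PMF S)
    (hAST : ∀ σ : S, ∑' τ, W G body σ τ = 1)
    (E : S → ℝ≥0∞) (hE : ∀ σ, E σ ≤ 1)
    (I : S → ℝ≥0∞) (hI : ∀ σ, I σ ≤ 1)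
    (hsub : ∀ σ, I σ ≤ Phi G body E I σ)
    (preE : S → ℝ≥0∞) (hpre : ∀ σ, preE σ ≤ I σ) :
    ∀ σ, preE σ ≤ OrderHom.lfp (PhiHom G body E) σ :=
  subinvariant_lower_bound_general G body hAST E I hI hsub preE hpre
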